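/- arXiv:math/0508643 — 2 statements merged into one kernel-verified Lean document; each statement's English description precedes it below -/
import Mathlib

section
/- (Combinatorial core of Theorem 1.3.) Let n ≥ k ≥ 2 and let (Γ, α) be an abstract 1-skeleton of type (n, k) on a nonempty finite vertex set P such that the vertex colorings are pairwise distinct, i.e. α(E_p) ≠ α(E_q) as multisets whenever p ≠ q. Then the number of vertices satisfies |P| ≥ 1 + ⌈n/(n−k+1)⌉, where ⌈r⌉ denotes the least integer greater than or equal to r. -/
/-- Two multisets of vectors of `V` are *congruent mod `ρ`* if their images under the
quotient map `V → V ⧸ span {ρ}` are equal as multisets. -/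
def CongMod {V : Type*} [AddCommGroup V] [Module (ZMod 2) V] (ρ : V)
    (A B : Multiset V) : Prop :=
  A.map ⇑(Submodule.span (ZMod 2) {ρ}).mkQ = B.map ⇑(Submodule.span (ZMod 2) {ρ}).mkQ

section aux
variable {V : Type*} [AddCommGroup V] [Module (ZMod 2) V]

lemma char2 (x : V) : x + x = 0 := by
  have h2 : (2 : ZMod 2) = 0 := by decide
  calc x + x = (2 : ZMod 2) • x := (two_smul (ZMod 2) x).symm
  _ = 0 := by rw [h2, zero_smul]

lemma neg_eq_self_char2 (x : V) : -x = x :=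
  neg_eq_of_add_eq_zero_left (char2 x)

lemma cong_count [DecidableEq V] {ρ : V} (hρ : ρ ≠ 0) {A B : Multiset V}
    (h : CongMod ρ A B) (w : V) :
    A.count w + A.count (w + ρ) = B.count w + B.count (w + ρ) := by
  classical
  have hne : w ≠ w + ρ := by
    intro hw
    exact hρ (by simpa using hw.symm)
  have hfib : ∀ (s : Multiset V),
      ((s.map ⇑(Submodule.span (ZMod 2) {ρ}).mkQ).count ((Submodule.span (ZMod 2) {ρ}).mkQ w))
        = s.count w + s.count (w + ρ) := by
    intro s
    rw [Multiset.count_map]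
    have hpred : ∀ a ∈ s,
        ((Submodule.span (ZMod 2) {ρ}).mkQ w = (Submodule.span (ZMod 2) {ρ}).mkQ a)
          ↔ (w = a ∨ w + ρ = a) := by
      intro a _
      rw [Submodule.mkQ_apply, Submodule.mkQ_apply, Submodule.Quotient.eq,
        Submodule.mem_span_singleton]
      constructor
      · rintro ⟨c, hc⟩
        have hc2 : ∀ d : ZMod 2, d = 0 ∨ d = 1 := by decide
        rcases hc2 c with rfl | rfl
        · left
          rw [zero_smul] at hc
          exact sub_eq_zero.mp hc.symm
        · right
          have h1 : ρ = w - a := by simpa using hc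
          have h2 : w + ρ = a + (ρ + ρ) := by rw [h1]; abel
          simpa [char2] using h2
      · rintro (rfl | rfl)
        · exact ⟨0, by simp⟩
        · exact ⟨1, by rw [one_smul, sub_add_cancel_left, neg_eq_self_char2]⟩
    rw [Multiset.filter_congr hpred]
    have hsplit := Multiset.filter_add_filter (fun a => w = a) (fun a => w + ρ = a) s
    have hand : (s.filter fun a => w = a ∧ w + ρ = a) = 0 := by
      rw [Multiset.filter_eq_nil]
      rintro a ha ⟨rfl, h2⟩
      exact hne h2.symm
    rw [hand, add_zero] at hsplit
    rw [← hsplit, Multiset.card_add, Multiset.count, Multiset.count,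
      Multiset.countP_eq_card_filter, Multiset.countP_eq_card_filter]
  have h1 := hfib A
  rw [h] at h1
  exact h1.symm.trans (hfib B)
end aux

section key
variable {V : Type*} [AddCommGroup V] [Module (ZMod 2) V]

lemma key_card_le [FiniteDimensional (ZMod 2) V]
    {k n : ℕ} (hk : Module.finrank (ZMod 2) V = k)
    {A B C : Multiset V} (hAcard : Multiset.card A = n) (hBcard : Multiset.card B = n)
    (hBspan : Submodule.span (ZMod 2) {v : V | v ∈ B} = ⊤)
    (hAB : A ≠ B) (hC0 : ∀ ρ ∈ C, ρ ≠ 0) (hCA : C ≤ A) (hCB : C ≤ B)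
    (hcong : ∀ ρ ∈ C, CongMod ρ A B) :
    Multiset.card C + k ≤ n + 1 := by
  classical
  have hv : ∃ v, B.count v < A.count v := by
    by_contra hcon
    push_neg at hcon
    exact hAB (Multiset.eq_of_le_of_card_le (Multiset.le_iff_count.mpr hcon)
      (by rw [hAcard, hBcard]))
  obtain ⟨v, hv⟩ := hv
  set D : Finset V := C.toFinset with hD
  set W : Submodule (ZMod 2) V := Submodule.span (ZMod 2) (insert v (D : Set V)) with hW
  set T : Finset V := D.image (fun ρ => v + ρ) with hT
  set E : Finset V := B.toFinset.filter (fun w => w ∉ W) with hE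
  have hvW : v ∈ W := Submodule.subset_span (Set.mem_insert _ _)
  have hDW : ∀ ρ ∈ D, (ρ : V) ∈ W := fun ρ hρ =>
    Submodule.subset_span (Set.mem_insert_of_mem _ hρ)
  have hTW : ∀ w ∈ T, w ∈ W := by
    intro w hw
    rw [hT, Finset.mem_image] at hw
    obtain ⟨ρ, hρ, rfl⟩ := hw
    exact W.add_mem hvW (hDW ρ hρ)
  have hle : C + T.val + E.val ≤ B := by
    rw [Multiset.le_iff_count]
    intro w
    rw [Multiset.count_add, Multiset.count_add]
    by_cases hwE : w ∈ E
    · have hwW : w ∉ W := by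
        rw [hE] at hwE; exact (Finset.mem_filter.mp hwE).2
      have h1 : C.count w = 0 := by
        rw [Multiset.count_eq_zero]
        intro hwC
        exact hwW (hDW w (Multiset.mem_toFinset.mpr hwC))
      have h2 : T.val.count w = 0 :=
        Multiset.count_eq_zero_of_notMem (fun hwT => hwW (hTW w hwT))
      have h3 : E.val.count w = 1 := Multiset.count_eq_one_of_mem E.nodup hwE
      have h4 : 1 ≤ B.count w := by
        rw [Multiset.one_le_count_iff_mem]
        exact Multiset.mem_toFinset.mp (Finset.mem_filter.mp (by rw [hE] at hwE; exact hwE)).1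
      omega
    · have h3 : E.val.count w = 0 := Multiset.count_eq_zero_of_notMem hwE
      by_cases hwT : w ∈ T
      · have h2 : T.val.count w = 1 := Multiset.count_eq_one_of_mem T.nodup hwT
        obtain ⟨ρ, hρ, rfl⟩ := Finset.mem_image.mp (by rw [hT] at hwT; exact hwT)
        have hρC : ρ ∈ C := Multiset.mem_toFinset.mp hρ
        have hcc := cong_count (hC0 ρ hρC) (hcong ρ hρC) v
        have hCA' := Multiset.le_iff_count.mp hCA (v + ρ)
        beta_reduce at h2 h3 ⊢
        omega
      · have h2 : T.val.count w = 0 := Multiset.count_eq_zero_of_notMem hwT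
        have := Multiset.le_iff_count.mp hCB w
        omega
  have hcount : Multiset.card C + T.card + E.card ≤ n := by
    have hc2 := Multiset.card_le_card hle
    rw [Multiset.card_add, Multiset.card_add, hBcard] at hc2
    simpa using hc2
  have hTcard : T.card = D.card := Finset.card_image_of_injective _ (add_right_injective v)
  have hkle : k ≤ D.card + 1 + E.card := by
    set F : Finset V := insert v D ∪ E with hF
    have hsub : (insert v (D : Set V)) ⊆ (F : Set V) := by
      rw [hF]
      push_cast [Finset.coe_union, Finset.coe_insert]
      exact Set.subset_union_left
    have hspanF : Submodule.span (ZMod 2) (F : Set V) = ⊤ := by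
      rw [eq_top_iff, ← hBspan, Submodule.span_le]
      intro w hw
      by_cases hwW : w ∈ W
      · exact (Submodule.span_mono hsub : W ≤ _) hwW
      · apply Submodule.subset_span
        rw [hF]
        have hwE : w ∈ E := by
          rw [hE, Finset.mem_filter]
          exact ⟨Multiset.mem_toFinset.mpr hw, hwW⟩
        exact Finset.mem_coe.mpr (Finset.mem_union_right _ hwE)
    have h1 : k ≤ F.card := by
      rw [← hk]
      calc Module.finrank (ZMod 2) V
          = Module.finrank (ZMod 2) (⊤ : Submodule (ZMod 2) V) := (finrank_top _ _).symm
        _ = Module.finrank (ZMod 2) (Submodule.span (ZMod 2) (F : Set V)) := by rw [hspanF]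
        _ ≤ F.card := finrank_span_finset_le_card F
    calc k ≤ F.card := h1
      _ ≤ (insert v D).card + E.card := Finset.card_union_le _ _
      _ ≤ D.card + 1 + E.card := by
          have := Finset.card_insert_le v D
          omega
  omega
end key

lemma card_finset_sum {P : Type*} {V : Type*} (s : Finset P) (f : P → Multiset V) :
    Multiset.card (∑ q ∈ s, f q) = ∑ q ∈ s, Multiset.card (f q) := by
  induction s using Finset.cons_induction with
  | empty => simp
  | cons a s ha ih => simp [Finset.sum_cons, ih]

/-- Combinatorial core of Theorem 1.3: an abstract 1-skeleton of type `(n,k)` (with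
`n ≥ k ≥ 2`) on a nonempty finite vertex set `P`, whose vertex colorings are pairwise
distinct, has at least `1 + ⌈n/(n-k+1)⌉` vertices. -/
theorem lower_bound_number_of_vertices
    {V : Type*} [AddCommGroup V] [Module (ZMod 2) V] [FiniteDimensional (ZMod 2) V]
    (k n : ℕ) (hk : Module.finrank (ZMod 2) V = k) (hk2 : 2 ≤ k) (hkn : k ≤ n)
    {P : Type*} [Fintype P] [Nonempty P]
    (c : P → P → Multiset V)
    (hsymm : ∀ p q, c p q = c q p)
    (hloop : ∀ p, c p p = 0)
    (hc0 : ∀ p q, ∀ v ∈ c p q, v ≠ (0 : V))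
    (α : P → Multiset V)
    (hα : ∀ p, α p = ∑ q, c p q)
    (hcard : ∀ p, Multiset.card (α p) = n)
    (hspan : ∀ p, Submodule.span (ZMod 2) {v : V | v ∈ α p} = ⊤)
    (hP2 : ∀ p q, p ≠ q → ∀ ρ ∈ c p q, CongMod ρ (α p) (α q))
    (hdist : ∀ p q, p ≠ q → α p ≠ α q) :
    (1 : ℤ) + ⌈(n : ℚ) / ((n : ℚ) - (k : ℚ) + 1)⌉ ≤ (Fintype.card P : ℤ) := by
  classical
  obtain ⟨p⟩ := (inferInstance : Nonempty P)
  set m := Fintype.card P with hm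
  have hm1 : 1 ≤ m := Fintype.card_pos
  -- each edge bundle has at most n + 1 - k colors
  have hedge : ∀ q, q ≠ p → Multiset.card (c p q) ≤ n + 1 - k := by
    intro q hq
    have hCA : c p q ≤ α p := by
      rw [hα p]
      exact Finset.single_le_sum (f := fun q' => c p q') (fun i _ => zero_le)
        (Finset.mem_univ q)
    have hCB : c p q ≤ α q := by
      rw [hsymm p q, hα q]
      exact Finset.single_le_sum (f := fun q' => c q q') (fun i _ => zero_le)
        (Finset.mem_univ p)
    have hkey := key_card_le hk (hcard p) (hcard q) (hspan q)
      (hdist p q (Ne.symm hq)) (hc0 p q) hCA hCB (hP2 p q (Ne.symm hq))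
    omega
  -- total count
  have htot : n ≤ (m - 1) * (n + 1 - k) := by
    have h1 : n = ∑ q ∈ Finset.univ.erase p, Multiset.card (c p q) := by
      rw [← hcard p, hα p, card_finset_sum]
      rw [← Finset.add_sum_erase Finset.univ _ (Finset.mem_univ p)]
      rw [hloop p]
      simp
    have h2 : ∑ q ∈ Finset.univ.erase p, Multiset.card (c p q)
        ≤ ∑ _q ∈ Finset.univ.erase p, (n + 1 - k) :=
      Finset.sum_le_sum (fun q hq => hedge q (Finset.ne_of_mem_erase hq))
    rw [Finset.sum_const, Finset.card_erase_of_mem (Finset.mem_univ p),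
      Finset.card_univ, ← hm, smul_eq_mul] at h2
    omega
  -- arithmetic
  have hb : (0 : ℚ) < (n : ℚ) - (k : ℚ) + 1 := by
    have : (k : ℚ) ≤ (n : ℚ) := by exact_mod_cast hkn
    linarith
  have hceil : ⌈(n : ℚ) / ((n : ℚ) - (k : ℚ) + 1)⌉ ≤ (m : ℤ) - 1 := by
    rw [Int.ceil_le]
    rw [div_le_iff₀ hb]
    have hcast := (Nat.cast_le (α := ℚ)).mpr htot
    have e1 : ((m - 1 : ℕ) : ℚ) = (m : ℚ) - 1 := by
      push_cast [Nat.cast_sub hm1]; ring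
    have e2 : ((n + 1 - k : ℕ) : ℚ) = (n : ℚ) + 1 - k := by
      push_cast [Nat.cast_sub (by omega : k ≤ n + 1)]; ring
    rw [Nat.cast_mul, e1, e2] at hcast
    push_cast
    nlinarith [hcast]
  omega
end

section
/- (Lemma 7.3, structure of the changeable part.) Under the four-vertex hypotheses, let the changeable part be the multiset ω̲̂ := ω̂ + β̂₀ + γ̂₀ + δ̂₀, and suppose ω̲̂ is nonempty. Then for every γ ∈ γ̂₁ and δ ∈ δ̂₁, every element ξ of ω̲̂ has the form ξ = γ + δ + β for some β ∈ β̂₁. -/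
open Function

theorem Function.Antiperiodic.of_add_of_sub {α : Type*} [Add α] {f g : α → ℤ} {c : α}
    (hadd : Antiperiodic (f + g) c) (hsub : Antiperiodic (f - g) c) :
    Antiperiodic f c ∧ Antiperiodic g c := by
  constructor <;> intro v <;> have := hadd v <;> have := hsub v <;>
    simp only [Pi.add_apply, Pi.sub_apply] at * <;> omega

/- `0 < y v` stands for `v ∈ γ̂`: such `v` avoids `β̂, λ̂, δ̂, ε̂` and makes `A_p − A_r = x + z`
antiperiodic. The other fields say the same for `η̂`, `δ̂`, `ε̂`. -/
structure FourVertexProfile {V : Type*} [Add V] (x y z : V → ℤ) : Prop where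
  pos_y : ∀ v, 0 < y v → x v = 0 ∧ z v = 0 ∧ Antiperiodic (x + z) v
  neg_y : ∀ v, y v < 0 → x v = 0 ∧ z v = 0 ∧ Antiperiodic (x - z) v
  pos_z : ∀ v, 0 < z v → x v = 0 ∧ y v = 0 ∧ Antiperiodic (x + y) v
  neg_z : ∀ v, z v < 0 → x v = 0 ∧ y v = 0 ∧ Antiperiodic (x - y) v

namespace FourVertexProfile
variable {V : Type*} [AddCommGroup V] {x y z : V → ℤ} {γ δ ξ : V}

theorem swap (h : FourVertexProfile x y z) : FourVertexProfile x z y :=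
  ⟨h.pos_z, h.neg_z, h.pos_y, h.neg_y⟩

theorem pos_of_antiperiodic_yz (h : FourVertexProfile x y z) (hγ : 0 < y γ) (hδ : 0 < z δ)
    (hadd : Antiperiodic (y + z) ξ) (hsub : Antiperiodic (y - z) ξ) : 0 < x (γ + δ + ξ) := by
  obtain ⟨hy, hz⟩ := hadd.of_add_of_sub hsub
  obtain ⟨-, -, hγa⟩ := h.pos_y γ hγ
  obtain ⟨hxδ, -, -⟩ := h.pos_z δ hδ
  obtain ⟨-, -, hγξa⟩ := h.neg_y (γ + ξ) (by rw [hy]; omega)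
  obtain ⟨hxδξ, -, -⟩ := h.neg_z (δ + ξ) (by rw [hz]; omega)
  have e₁ := hγa (δ + ξ)
  have e₂ := hγξa δ
  rw [show δ + ξ + γ = γ + δ + ξ by abel] at e₁
  rw [show δ + (γ + ξ) = γ + δ + ξ by abel] at e₂
  simp only [Pi.add_apply, Pi.sub_apply, hz δ] at e₁ e₂
  omega

theorem pos_of_antiperiodic_xz (h : FourVertexProfile x y z) (hγ : 0 < y γ) (hδ : 0 < z δ)
    (hadd : Antiperiodic (x + z) ξ) (hsub : Antiperiodic (x - z) ξ) : 0 < x (γ + δ + ξ) := by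
  obtain ⟨hx, hz⟩ := hadd.of_add_of_sub hsub
  obtain ⟨hxγ, -, hγa⟩ := h.pos_y γ hγ
  obtain ⟨hxδ, -, hδa⟩ := h.pos_z δ hδ
  obtain ⟨hxδξ, -, hδξa⟩ := h.neg_z (δ + ξ) (by rw [hz]; omega)
  have hxz : (x + z) (γ + δ) = -z δ := by
    rw [add_comm γ, hγa]; simp [hxδ]
  -- otherwise `γ` and `γ - ξ` would give `(x + z) (γ + δ)` the opposite values `∓ z δ`
  have hyγξ : y (γ - ξ) ≤ 0 := by
    by_contra! hpos
    obtain ⟨-, -, ha⟩ := h.pos_y (γ - ξ) hpos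
    have e := ha (δ + ξ)
    rw [show δ + ξ + (γ - ξ) = γ + δ by abel, hxz] at e
    simp only [Pi.add_apply, hxδξ, hz δ] at e
    omega
  have e₁ := hδa γ
  have e₂ := hδξa (γ - ξ)
  have e₃ := hx (γ - ξ)
  rw [add_comm] at e₁
  rw [show γ - ξ + (δ + ξ) = γ + δ by abel] at e₂
  rw [sub_add_cancel] at e₃
  simp only [Pi.add_apply, Pi.sub_apply, hxγ] at e₁ e₂
  rw [hx]
  omega

theorem pos_of_antiperiodic_xy (h : FourVertexProfile x y z) (hγ : 0 < y γ) (hδ : 0 < z δ)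
    (hadd : Antiperiodic (x + y) ξ) (hsub : Antiperiodic (x - y) ξ) : 0 < x (γ + δ + ξ) := by
  simpa only [add_comm δ γ] using h.swap.pos_of_antiperiodic_xz hδ hγ hadd hsub

end FourVertexProfile

section countDiff
variable {α : Type*} [DecidableEq α] {X Y : Multiset α} {a : α}

def countDiff (X Y : Multiset α) (a : α) : ℤ := X.count a - Y.count a

theorem mem_of_countDiff_pos (h : 0 < countDiff X Y a) : a ∈ X :=
  Multiset.count_pos.1 (by unfold countDiff at h; omega)

theorem mem_of_countDiff_neg (h : countDiff X Y a < 0) : a ∈ Y :=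
  Multiset.count_pos.1 (by unfold countDiff at h; omega)

theorem countDiff_eq_zero_of_notMem (hX : a ∉ X) (hY : a ∉ Y) : countDiff X Y a = 0 := by
  simp [countDiff, Multiset.count_eq_zero_of_notMem hX, Multiset.count_eq_zero_of_notMem hY]

theorem mem_sub_inter_iff_countDiff_pos : a ∈ X - X ∩ Y ↔ 0 < countDiff X Y a := by
  rw [← Multiset.count_pos, Multiset.count_sub, Multiset.count_inter, countDiff]
  omega

end countDiff

section ZModTwo
variable {V : Type*} [AddCommGroup V] [Module (ZMod 2) V]

theorem mem_span_singleton_zmod_two {ρ v : V} :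
    v ∈ Submodule.span (ZMod 2) {ρ} ↔ v = 0 ∨ v = ρ := by
  rw [Submodule.mem_span_singleton]
  constructor
  · rintro ⟨a, rfl⟩
    fin_cases a
    exacts [Or.inl (zero_smul _ _), Or.inr (one_smul _ _)]
  · rintro (rfl | rfl)
    exacts [⟨0, zero_smul _ _⟩, ⟨1, one_smul _ _⟩]

theorem mkQ_span_singleton_eq_iff {ρ a b : V} :
    (Submodule.span (ZMod 2) {ρ}).mkQ a = (Submodule.span (ZMod 2) {ρ}).mkQ b ↔
      a = b ∨ a + ρ = b := by
  rw [Submodule.mkQ_apply, Submodule.mkQ_apply, Submodule.Quotient.eq',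
    mem_span_singleton_zmod_two, neg_add_eq_zero, neg_add_eq_iff_eq_add, eq_comm (a := b)]

theorem count_map_mkQ_span_singleton [DecidableEq V] {ρ : V}
    [DecidableEq (V ⧸ Submodule.span (ZMod 2) {ρ})] (hρ : ρ ≠ 0) (X : Multiset V) (v : V) :
    (X.map (Submodule.span (ZMod 2) {ρ}).mkQ).count ((Submodule.span (ZMod 2) {ρ}).mkQ v) =
      X.count v + X.count (v + ρ) := by
  have hdisj : X.filter (fun a => v = a ∧ v + ρ = a) = 0 :=
    Multiset.filter_eq_nil.2 fun a _ h => hρ (by simpa using h.2.trans h.1.symm)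
  rw [Multiset.count_map, Multiset.count_eq_card_filter_eq, Multiset.count_eq_card_filter_eq,
    ← Multiset.card_add, Multiset.filter_add_filter, hdisj, add_zero]
  simp_rw [mkQ_span_singleton_eq_iff]

theorem CongMod.antiperiodic_countDiff [DecidableEq V] {ρ : V} {X Y : Multiset V}
    (h : CongMod ρ X Y) : Antiperiodic (countDiff X Y) ρ := by
  classical
  intro v
  by_cases hρ : ρ = 0
  · subst hρ
    have hinj : Injective (Submodule.span (ZMod 2) {(0 : V)}).mkQ := fun a b hab => by
      simpa using mkQ_span_singleton_eq_iff.1 hab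
    simp [Multiset.map_injective hinj h, countDiff]
  · have h2 := congrArg (Multiset.count ((Submodule.span (ZMod 2) {ρ}).mkQ v)) h
    rw [count_map_mkQ_span_singleton hρ, count_map_mkQ_span_singleton hρ] at h2
    simp only [countDiff]
    omega

end ZModTwo

section FourVertex
variable {V : Type*} [AddCommGroup V] [Module (ZMod 2) V] [DecidableEq V] {ρ : V}
  {W B C D E H L : Multiset V}

/- `W + B + C + D`, `W + B + E + H`, `W + E + C + L`, `W + D + H + L` are `A_p, A_q, A_r, A_s`;
the suffixes below name the pair of vertices. -/

theorem CongMod.antiperiodic_pq (h : CongMod ρ (W + B + C + D) (W + B + E + H)) :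
    Antiperiodic (countDiff C H + countDiff D E) ρ := by
  convert h.antiperiodic_countDiff using 1
  ext; simp only [countDiff, Multiset.count_add, Pi.add_apply]; push_cast; ring

theorem CongMod.antiperiodic_pr (h : CongMod ρ (W + B + C + D) (W + E + C + L)) :
    Antiperiodic (countDiff B L + countDiff D E) ρ := by
  convert h.antiperiodic_countDiff using 1
  ext; simp only [countDiff, Multiset.count_add, Pi.add_apply]; push_cast; ring

theorem CongMod.antiperiodic_ps (h : CongMod ρ (W + B + C + D) (W + D + H + L)) :
    Antiperiodic (countDiff B L + countDiff C H) ρ := by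
  convert h.antiperiodic_countDiff using 1
  ext; simp only [countDiff, Multiset.count_add, Pi.add_apply]; push_cast; ring

theorem CongMod.antiperiodic_qr (h : CongMod ρ (W + B + E + H) (W + E + C + L)) :
    Antiperiodic (countDiff B L - countDiff C H) ρ := by
  convert h.antiperiodic_countDiff using 1
  ext; simp only [countDiff, Multiset.count_add, Pi.sub_apply]; push_cast; ring

theorem CongMod.antiperiodic_qs (h : CongMod ρ (W + B + E + H) (W + D + H + L)) :
    Antiperiodic (countDiff B L - countDiff D E) ρ := by
  convert h.antiperiodic_countDiff using 1
  ext; simp only [countDiff, Multiset.count_add, Pi.sub_apply]; push_cast; ring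

theorem CongMod.antiperiodic_rs (h : CongMod ρ (W + E + C + L) (W + D + H + L)) :
    Antiperiodic (countDiff C H - countDiff D E) ρ := by
  convert h.antiperiodic_countDiff using 1
  ext; simp only [countDiff, Multiset.count_add, Pi.sub_apply]; push_cast; ring

theorem fourVertexProfile_of_congMod
    (hBC : ∀ v, v ∈ B → v ∈ C → False) (hBD : ∀ v, v ∈ B → v ∈ D → False)
    (hBE : ∀ v, v ∈ B → v ∈ E → False) (hBH : ∀ v, v ∈ B → v ∈ H → False)
    (hCD : ∀ v, v ∈ C → v ∈ D → False) (hCE : ∀ v, v ∈ C → v ∈ E → False)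
    (hCL : ∀ v, v ∈ C → v ∈ L → False)
    (hDH : ∀ v, v ∈ D → v ∈ H → False) (hDL : ∀ v, v ∈ D → v ∈ L → False)
    (hEH : ∀ v, v ∈ E → v ∈ H → False) (hEL : ∀ v, v ∈ E → v ∈ L → False)
    (hHL : ∀ v, v ∈ H → v ∈ L → False)
    (hP2C : ∀ γ ∈ C, CongMod γ (W + B + C + D) (W + E + C + L))
    (hP2D : ∀ δ ∈ D, CongMod δ (W + B + C + D) (W + D + H + L))
    (hP2E : ∀ ε ∈ E, CongMod ε (W + B + E + H) (W + E + C + L))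
    (hP2H : ∀ η ∈ H, CongMod η (W + B + E + H) (W + D + H + L)) :
    FourVertexProfile (countDiff B L) (countDiff C H) (countDiff D E) where
  pos_y v hv := by
    have hC := mem_of_countDiff_pos hv
    exact ⟨countDiff_eq_zero_of_notMem (hBC v · hC) (hCL v hC),
      countDiff_eq_zero_of_notMem (hCD v hC) (hCE v hC), (hP2C v hC).antiperiodic_pr⟩
  neg_y v hv := by
    have hH := mem_of_countDiff_neg hv
    exact ⟨countDiff_eq_zero_of_notMem (hBH v · hH) (hHL v hH),
      countDiff_eq_zero_of_notMem (hDH v · hH) (hEH v · hH), (hP2H v hH).antiperiodic_qs⟩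
  pos_z v hv := by
    have hD := mem_of_countDiff_pos hv
    exact ⟨countDiff_eq_zero_of_notMem (hBD v · hD) (hDL v hD),
      countDiff_eq_zero_of_notMem (hCD v · hD) (hDH v hD), (hP2D v hD).antiperiodic_ps⟩
  neg_z v hv := by
    have hE := mem_of_countDiff_neg hv
    exact ⟨countDiff_eq_zero_of_notMem (hBE v · hE) (hEL v hE),
      countDiff_eq_zero_of_notMem (hCE v · hE) (hEH v hE), (hP2E v hE).antiperiodic_qr⟩

end FourVertex

/- Four-vertex hypotheses: `W, B, C, D, E, H, L` model `ω̂, β̂, γ̂, δ̂, ε̂, η̂, λ̂`. -/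
theorem four_fixed_points_changeable_part_general
    {V : Type*} [AddCommGroup V] [Module (ZMod 2) V]
    [DecidableEq V]
    (W B C D E H L : Multiset V)
    (Ap Aq Ar As : Multiset V)
    (hAp : Ap = W + B + C + D) (hAq : Aq = W + B + E + H)
    (hAr : Ar = W + E + C + L) (hAs : As = W + D + H + L)
    (hBC : ∀ v, v ∈ B → v ∈ C → False) (hBD : ∀ v, v ∈ B → v ∈ D → False)
    (hBE : ∀ v, v ∈ B → v ∈ E → False) (hBH : ∀ v, v ∈ B → v ∈ H → False)
    (hCD : ∀ v, v ∈ C → v ∈ D → False) (hCE : ∀ v, v ∈ C → v ∈ E → False)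
    (hCL : ∀ v, v ∈ C → v ∈ L → False)
    (hDH : ∀ v, v ∈ D → v ∈ H → False) (hDL : ∀ v, v ∈ D → v ∈ L → False)
    (hEH : ∀ v, v ∈ E → v ∈ H → False) (hEL : ∀ v, v ∈ E → v ∈ L → False)
    (hHL : ∀ v, v ∈ H → v ∈ L → False)
    (hP2B : ∀ β ∈ B, CongMod β Ap Aq)
    (hP2C : ∀ γ ∈ C, CongMod γ Ap Ar)
    (hP2D : ∀ δ ∈ D, CongMod δ Ap As)
    (hP2E : ∀ ε ∈ E, CongMod ε Aq Ar)
    (hP2H : ∀ η ∈ H, CongMod η Aq As)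
    (hP2L : ∀ lam ∈ L, CongMod lam Ar As)
    (hP2W : ∀ ξ ∈ W, CongMod ξ Ap Aq ∧ CongMod ξ Ap Ar ∧ CongMod ξ Ap As ∧
        CongMod ξ Aq Ar ∧ CongMod ξ Aq As ∧ CongMod ξ Ar As)
    (B0 B1 C0 C1 D0 D1 : Multiset V)
    (hB0def : B0 = B ∩ L) (hB1def : B1 = B - B0)
    (hC0def : C0 = C ∩ H) (hC1def : C1 = C - C0)
    (hD0def : D0 = D ∩ E) (hD1def : D1 = D - D0)
    (Wc : Multiset V) (hWc : Wc = W + B0 + C0 + D0) :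
    ∀ γ ∈ C1, ∀ δ ∈ D1, ∀ ξ ∈ Wc, ∃ β ∈ B1, ξ = γ + δ + β := by
  subst hAp hAq hAr hAs hB0def hC0def hD0def hB1def hC1def hD1def hWc
  have hP := fourVertexProfile_of_congMod hBC hBD hBE hBH hCD hCE hCL hDH hDL hEH hEL hHL
    hP2C hP2D hP2E hP2H
  intro γ hγ δ hδ ξ hξ
  rw [mem_sub_inter_iff_countDiff_pos] at hγ hδ
  refine ⟨γ + δ + ξ, mem_sub_inter_iff_countDiff_pos.2 ?_, ?_⟩
  · simp only [Multiset.mem_add, Multiset.mem_inter] at hξ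
    rcases hξ with ((hW | ⟨hB, hL⟩) | ⟨hC, hH⟩) | ⟨hD, hE⟩
    · exact hP.pos_of_antiperiodic_yz hγ hδ (CongMod.antiperiodic_pq (hP2W ξ hW).1)
        (CongMod.antiperiodic_rs (hP2W ξ hW).2.2.2.2.2)
    · exact hP.pos_of_antiperiodic_yz hγ hδ (CongMod.antiperiodic_pq (hP2B ξ hB))
        (CongMod.antiperiodic_rs (hP2L ξ hL))
    · exact hP.pos_of_antiperiodic_xz hγ hδ (CongMod.antiperiodic_pr (hP2C ξ hC))
        (CongMod.antiperiodic_qs (hP2H ξ hH))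
    · exact hP.pos_of_antiperiodic_xy hγ hδ (CongMod.antiperiodic_ps (hP2D ξ hD))
        (CongMod.antiperiodic_qr (hP2E ξ hE))
  · rw [← add_assoc, ZModModule.add_self, zero_add]

theorem four_fixed_points_changeable_part
    {V : Type*} [AddCommGroup V] [Module (ZMod 2) V] [FiniteDimensional (ZMod 2) V]
    [DecidableEq V]
    (k n : ℕ) (hk : Module.finrank (ZMod 2) V = k) (hk3 : 3 ≤ k)
    (W B C D E H L : Multiset V)
    (hW0 : ∀ v ∈ W, v ≠ (0 : V)) (hB0 : ∀ v ∈ B, v ≠ (0 : V)) (hC0 : ∀ v ∈ C, v ≠ (0 : V))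
    (hD0 : ∀ v ∈ D, v ≠ (0 : V)) (hE0 : ∀ v ∈ E, v ≠ (0 : V)) (hH0 : ∀ v ∈ H, v ≠ (0 : V))
    (hL0 : ∀ v ∈ L, v ≠ (0 : V))
    (Ap Aq Ar As : Multiset V)
    (hAp : Ap = W + B + C + D) (hAq : Aq = W + B + E + H)
    (hAr : Ar = W + E + C + L) (hAs : As = W + D + H + L)
    (hcardp : Multiset.card Ap = n) (hcardq : Multiset.card Aq = n)
    (hcardr : Multiset.card Ar = n) (hcards : Multiset.card As = n)
    (hpq : Ap ≠ Aq) (hpr : Ap ≠ Ar) (hps : Ap ≠ As)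
    (hqr : Aq ≠ Ar) (hqs : Aq ≠ As) (hrs : Ar ≠ As)
    (hspanp : Submodule.span (ZMod 2) {v : V | v ∈ Ap} = ⊤)
    (hspanq : Submodule.span (ZMod 2) {v : V | v ∈ Aq} = ⊤)
    (hspanr : Submodule.span (ZMod 2) {v : V | v ∈ Ar} = ⊤)
    (hspans : Submodule.span (ZMod 2) {v : V | v ∈ As} = ⊤)
    (hWB : ∀ v, v ∈ W → v ∈ B → False) (hWC : ∀ v, v ∈ W → v ∈ C → False)
    (hWD : ∀ v, v ∈ W → v ∈ D → False) (hWE : ∀ v, v ∈ W → v ∈ E → False)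
    (hWH : ∀ v, v ∈ W → v ∈ H → False) (hWL : ∀ v, v ∈ W → v ∈ L → False)
    (hBC : ∀ v, v ∈ B → v ∈ C → False) (hBD : ∀ v, v ∈ B → v ∈ D → False)
    (hBE : ∀ v, v ∈ B → v ∈ E → False) (hBH : ∀ v, v ∈ B → v ∈ H → False)
    (hCD : ∀ v, v ∈ C → v ∈ D → False) (hCE : ∀ v, v ∈ C → v ∈ E → False)
    (hCL : ∀ v, v ∈ C → v ∈ L → False)
    (hDH : ∀ v, v ∈ D → v ∈ H → False) (hDL : ∀ v, v ∈ D → v ∈ L → False)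
    (hEH : ∀ v, v ∈ E → v ∈ H → False) (hEL : ∀ v, v ∈ E → v ∈ L → False)
    (hHL : ∀ v, v ∈ H → v ∈ L → False)
    (hP2B : ∀ β ∈ B, CongMod β Ap Aq)
    (hP2C : ∀ γ ∈ C, CongMod γ Ap Ar)
    (hP2D : ∀ δ ∈ D, CongMod δ Ap As)
    (hP2E : ∀ ε ∈ E, CongMod ε Aq Ar)
    (hP2H : ∀ η ∈ H, CongMod η Aq As)
    (hP2L : ∀ lam ∈ L, CongMod lam Ar As)
    (hP2W : ∀ ξ ∈ W, CongMod ξ Ap Aq ∧ CongMod ξ Ap Ar ∧ CongMod ξ Ap As ∧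
        CongMod ξ Aq Ar ∧ CongMod ξ Aq As ∧ CongMod ξ Ar As)
    (B0 B1 L1 C0 C1 H1 D0 D1 E1 : Multiset V)
    (hB0def : B0 = B ∩ L) (hB1def : B1 = B - B0) (hL1def : L1 = L - B0)
    (hC0def : C0 = C ∩ H) (hC1def : C1 = C - C0) (hH1def : H1 = H - C0)
    (hD0def : D0 = D ∩ E) (hD1def : D1 = D - D0) (hE1def : E1 = E - D0)
    (Wc : Multiset V) (hWc : Wc = W + B0 + C0 + D0) (hWcne : Wc ≠ 0) :
    ∀ γ ∈ C1, ∀ δ ∈ D1, ∀ ξ ∈ Wc, ∃ β ∈ B1, ξ = γ + δ + β :=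
  four_fixed_points_changeable_part_general W B C D E H L Ap Aq Ar As hAp hAq hAr hAs hBC hBD hBE
    hBH hCD hCE hCL hDH hDL hEH hEL hHL hP2B hP2C hP2D hP2E hP2H hP2L hP2W B0 B1 C0 C1 D0 D1 hB0def
    hB1def hC0def hC1def hD0def hD1def Wc hWc
end
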